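/- Let a_1, …, a_p ∈ ℝ with ∑_{i=1}^p |a_i| ≤ a < 1, and let A be the p×p companion matrix with first row (|a_1|, …, |a_p|), subdiagonal identity I_{p-1}, and zeros elsewhere. Let v = (1,…,1)' ∈ ℝ^p. Then A v ≤ (a, 1, …, 1)' entrywise, and more generally the product of any p such matrices applied to v is ≤ a·v entrywise. -/

import Mathlib

open Matrix

/-- `A` is a nonnegative companion-type matrix: first row nonnegative with sum at
most `a`, subdiagonal identity, zeros elsewhere. -/
def CompanionLike {p : ℕ} (a : ℝ) (A : Matrix (Fin p) (Fin p) ℝ) : Prop :=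
  ∀ i : Fin p,
    if (i : ℕ) = 0 then (∀ j, 0 ≤ A i j) ∧ (∑ j, A i j ≤ a)
    else ∀ j : Fin p, A i j = if (j : ℕ) + 1 = (i : ℕ) then 1 else 0

lemma companion_row0 {p : ℕ} {a : ℝ} {A : Matrix (Fin p) (Fin p) ℝ}
    (hA : CompanionLike a A) {i : Fin p} (hi : (i : ℕ) = 0) :
    (∀ j, 0 ≤ A i j) ∧ (∑ j, A i j ≤ a) := by
  have := hA i; rwa [if_pos hi] at this

lemma companion_row_shift {p : ℕ} {a : ℝ} {A : Matrix (Fin p) (Fin p) ℝ}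
    (hA : CompanionLike a A) {i : Fin p} (hi : (i : ℕ) ≠ 0)
    (v : Fin p → ℝ) :
    A.mulVec v i = v ⟨(i : ℕ) - 1, by omega⟩ := by
  have hrow := hA i
  rw [if_neg hi] at hrow
  set i0 : Fin p := ⟨(i : ℕ) - 1, by omega⟩ with hi0
  have : A.mulVec v i = ∑ j, A i j * v j := rfl
  rw [this, Finset.sum_eq_single i0]
  · rw [hrow i0, if_pos (by simp [hi0]; omega), one_mul]
  · intro j _ hj
    rw [hrow j, if_neg, zero_mul]
    intro h
    apply hj
    apply Fin.ext
    simp [hi0]; omega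
  · intro h; exact absurd (Finset.mem_univ i0) h

lemma companion_mulVec_le {p : ℕ} {a : ℝ} (ha1 : a < 1)
    {A : Matrix (Fin p) (Fin p) ℝ} (hA : CompanionLike a A)
    {v : Fin p → ℝ} (hv : ∀ j, v j ≤ 1) :
    (∀ i : Fin p, A.mulVec v i ≤ 1 ∧ ((i : ℕ) = 0 → A.mulVec v i ≤ a)) ∧
    (∀ i : Fin p, (i : ℕ) ≠ 0 → A.mulVec v i = v ⟨(i : ℕ) - 1, by omega⟩) := by
  constructor
  · intro i
    by_cases hi : (i : ℕ) = 0
    · obtain ⟨hnn, hsum⟩ := companion_row0 hA hi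
      have hle : A.mulVec v i ≤ a := by
        calc A.mulVec v i = ∑ j, A i j * v j := rfl
          _ ≤ ∑ j, A i j := by
              apply Finset.sum_le_sum
              intro j _
              calc A i j * v j ≤ A i j * 1 := by
                    exact mul_le_mul_of_nonneg_left (hv j) (hnn j)
                _ = A i j := mul_one _
          _ ≤ a := hsum
      exact ⟨hle.trans ha1.le, fun _ => hle⟩
    · rw [companion_row_shift hA hi]
      exact ⟨hv _, fun h => absurd h hi⟩
  · intro i hi; exact companion_row_shift hA hi v

lemma prod_mulVec_le {p : ℕ} {a : ℝ} (ha0 : 0 ≤ a) (ha1 : a < 1) :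
    ∀ L : List (Matrix (Fin p) (Fin p) ℝ), (∀ A ∈ L, CompanionLike a A) →
      (∀ i : Fin p, L.prod.mulVec (fun _ => 1) i ≤ 1) ∧
      (∀ i : Fin p, (i : ℕ) < L.length → L.prod.mulVec (fun _ => 1) i ≤ a) := by
  intro L
  induction L with
  | nil =>
    intro _
    constructor
    · intro i; simp [Matrix.mulVec, Matrix.one_apply, dotProduct]
    · intro i hi; simp at hi
  | cons A L ih =>
    intro hmem
    have hA : CompanionLike a A := hmem A List.mem_cons_self
    obtain ⟨ih1, ih2⟩ := ih (fun B hB => hmem B (List.mem_cons_of_mem _ hB))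
    set w := L.prod.mulVec (fun _ => 1) with hw
    have hprod : (A :: L).prod.mulVec (fun _ => 1) = A.mulVec w := by
      rw [List.prod_cons, ← Matrix.mulVec_mulVec]
    obtain ⟨h1, h2⟩ := companion_mulVec_le ha1 hA ih1
    constructor
    · intro i; rw [hprod]; exact (h1 i).1
    · intro i hi
      rw [hprod]
      by_cases hi0 : (i : ℕ) = 0
      · exact (h1 i).2 hi0
      · rw [h2 i hi0]
        apply ih2
        simp at hi ⊢; omega

/-- Combinatorial core of Theorem A.1: for a companion matrix `A` with nonnegative
first row summing to at most `a < 1`, `A v ≤ (a,1,…,1)'` entrywise for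
`v = (1,…,1)'`, and the product of any `p` such matrices applied to `v` is `≤ a·v`
entrywise. -/
theorem stmt8 {p : ℕ} (a : ℝ) (ha0 : 0 ≤ a) (ha1 : a < 1) :
    (∀ A : Matrix (Fin p) (Fin p) ℝ, CompanionLike a A →
      ∀ i : Fin p, A.mulVec (fun _ => 1) i ≤ if (i : ℕ) = 0 then a else 1) ∧
    (∀ A : Fin p → Matrix (Fin p) (Fin p) ℝ, (∀ k, CompanionLike a (A k)) →
      ∀ i : Fin p, (List.ofFn A).prod.mulVec (fun _ => 1) i ≤ a) := by
  constructor
  · intro A hA i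
    obtain ⟨h1, _⟩ := companion_mulVec_le ha1 hA (v := fun _ => 1) (fun _ => le_refl 1)
    by_cases hi : (i : ℕ) = 0
    · rw [if_pos hi]; exact (h1 i).2 hi
    · rw [if_neg hi]; exact (h1 i).1
  · intro A hA i
    have := (prod_mulVec_le ha0 ha1 (List.ofFn A)
      (by intro B hB; obtain ⟨k, rfl⟩ := List.mem_ofFn.mp hB; exact hA k)).2 i
    apply this
    rw [List.length_ofFn]; exact i.isLt
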